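/- arXiv:1202.4703 — 4 statements merged into one kernel-verified Lean document; each statement's English description precedes it below -/
import Mathlib

section
/- Let C be a convex, max-closed and bounded subset of L0+, and let U : L0+ → [-∞, ∞) be concave, upper semi-continuous (with respect to the topology of convergence in probability) and monotone, i.e. U(f) ≤ U(g) whenever f ≤ g almost surely. Then there exists g in C^max (the set of maximal elements of C) such that sup_{f ∈ C} U(f) = U(g) < ∞. -/
open MeasureTheory Filter Set

noncomputable section

variable {Ω : Type*} [MeasurableSpace Ω]

/-- The nonnegative orthant `L⁰₊` of the space `L⁰` of (a.e.-equivalence classes of)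
random variables over `(Ω, ℱ, P)`. -/
def L0plus (P : Measure Ω) : Set (Ω →ₘ[P] ℝ) := {f | 0 ≤ f}

/-- The metric `(f, g) ↦ E[1 ∧ |f - g|]` inducing the topology of convergence
in probability on `L⁰`. -/
def dist0 (P : Measure Ω) (f g : Ω →ₘ[P] ℝ) : ℝ :=
  ∫ ω, min 1 |f ω - g ω| ∂P

/-- Convergence in probability of a sequence in `L⁰`. -/
def Tendsto0 (P : Measure Ω) (f : ℕ → Ω →ₘ[P] ℝ) (g : Ω →ₘ[P] ℝ) : Prop :=
  Tendsto (fun n => dist0 P (f n) g) atTop (nhds 0)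

/-- Closure of a set in `L⁰` with respect to the topology of convergence in probability. -/
def closure0 (P : Measure Ω) (C : Set (Ω →ₘ[P] ℝ)) : Set (Ω →ₘ[P] ℝ) :=
  {f | ∀ ε : ℝ, 0 < ε → ∃ g ∈ C, dist0 P f g < ε}

/-- A set of `L⁰` is closed iff it contains its closure. -/
def IsClosed0 (P : Measure Ω) (C : Set (Ω →ₘ[P] ℝ)) : Prop :=
  closure0 P C ⊆ C

/-- Boundedness (in probability) of a set `C ⊆ L⁰₊` : `lim_{ℓ → ∞} sup_{f ∈ C} P[f > ℓ] = 0`. -/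
def Bounded0 (P : Measure Ω) (C : Set (Ω →ₘ[P] ℝ)) : Prop :=
  Tendsto (fun ℓ : ℝ => ⨆ f ∈ C, P {ω | ℓ < f ω}) atTop (nhds 0)

/-- The set `C^max` of maximal elements of `C ⊆ L⁰₊` : `f ∈ C` such that `f ≤ g` a.s.
and `g ∈ C` imply `f = g` a.s. -/
def maxSet (P : Measure Ω) (C : Set (Ω →ₘ[P] ℝ)) : Set (Ω →ₘ[P] ℝ) :=
  {f | f ∈ C ∧ ∀ g ∈ C, f ≤ g → f = g}

/-- `C` is max-closed if every maximal element of its closure already belongs to `C`. -/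
def MaxClosed (P : Measure Ω) (C : Set (Ω →ₘ[P] ℝ)) : Prop :=
  maxSet P (closure0 P C) ⊆ C

/-- The pairing `⟨μ, f⟩ = ∫ f dμ ∈ [0, ∞]` between a nonnegative measure `μ` and `f ∈ L⁰₊`. -/
def pairing {P : Measure Ω} (μ : Measure Ω) (f : Ω →ₘ[P] ℝ) : ENNReal :=
  ∫⁻ ω, ENNReal.ofReal (f ω) ∂μ

/-- The set `C^osp` of outer support points of `C ⊆ L⁰₊`: points `g ∈ C^max` for which there
is a σ-finite nonnegative measure `μ ≪ P` with `0 < sup_{f ∈ C} ⟨μ, f⟩ = ⟨μ, g⟩ < ∞`;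
by convention `{0}^osp = {0}`. -/
def osp (P : Measure Ω) (C : Set (Ω →ₘ[P] ℝ)) : Set (Ω →ₘ[P] ℝ) :=
  {g | g ∈ maxSet P C ∧
    (C = {0} ∨ ∃ μ : Measure Ω, μ ≪ P ∧ SigmaFinite μ ∧
      0 < pairing μ g ∧ pairing μ g < ⊤ ∧ (⨆ f ∈ C, pairing μ f) = pairing μ g)}

/-- The solid hull of `C ⊆ L⁰₊`. -/
def solidHull (P : Measure Ω) (C : Set (Ω →ₘ[P] ℝ)) : Set (Ω →ₘ[P] ℝ) :=
  {f | f ∈ L0plus P ∧ ∃ g ∈ C, f ≤ g}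

/-- A set `S ⊆ L⁰₊` is solid if `g ∈ S` and `0 ≤ f ≤ g` imply `f ∈ S`. -/
def Solid (P : Measure Ω) (S : Set (Ω →ₘ[P] ℝ)) : Prop :=
  ∀ g ∈ S, ∀ f : Ω →ₘ[P] ℝ, 0 ≤ f → f ≤ g → f ∈ S

/-- `(g n)` is a sequence of forward convex combinations of `(f n)`. -/
def ForwardConvexComb (P : Measure Ω) (f g : ℕ → Ω →ₘ[P] ℝ) : Prop :=
  ∀ n : ℕ, g n ∈ convexHull ℝ (f '' Set.Ici n)

end

/-!
The functional `ψ f = E[1 - e^{-f}]` is bounded, strictly increasing and strictly concave on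
`L⁰₊`, and its midpoint concavity defect is half the Hellinger distance
`E[(e^{-f/2} - e^{-g/2})²]`, which on a bounded set controls convergence in probability.
Nearly maximizing `ψ` over the convex hulls of the tails of a `U`-maximizing sequence therefore
gives a sequence converging in probability (a Komlós-type argument); by concavity and upper
semicontinuity of `U` its limit `g ∈ closure C` satisfies `sup_C U ≤ U g`. Climbing greedily in
`ψ` above `g` inside the closure ends at a maximal element `h ≥ g` of the closure, which lies in
`C` by max-closedness, and `U g ≤ U h` by monotonicity.
-/

lemma min_one_dist_triangle {α : Type*} [PseudoMetricSpace α] (x y z : α) :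
    min 1 (dist x z) ≤ min 1 (dist x y) + min 1 (dist y z) := by
  have := dist_triangle x y z
  have := dist_nonneg (x := x) (y := y)
  have := dist_nonneg (x := y) (y := z)
  simp only [min_def]
  split_ifs <;> linarith

section

variable {Ω : Type*} [MeasurableSpace Ω] {P : Measure Ω}

lemma measurable_min_one_abs_sub (f g : Ω →ₘ[P] ℝ) :
    Measurable fun ω => min 1 |f ω - g ω| :=
  measurable_const.min (f.stronglyMeasurable.measurable.sub g.stronglyMeasurable.measurable).abs

lemma integrable_min_one_abs_sub [IsFiniteMeasure P] (f g : Ω →ₘ[P] ℝ) :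
    Integrable (fun ω => min 1 |f ω - g ω|) P := by
  refine (integrable_const (1 : ℝ)).mono' (measurable_min_one_abs_sub f g).aestronglyMeasurable
    (Eventually.of_forall fun ω => ?_)
  rw [Real.norm_of_nonneg (le_min zero_le_one (abs_nonneg _))]
  exact min_le_left _ _

lemma dist0_nonneg (f g : Ω →ₘ[P] ℝ) : 0 ≤ dist0 P f g :=
  integral_nonneg fun _ => le_min zero_le_one (abs_nonneg _)

lemma dist0_self (f : Ω →ₘ[P] ℝ) : dist0 P f f = 0 := by
  simp [dist0]

lemma dist0_comm (f g : Ω →ₘ[P] ℝ) : dist0 P f g = dist0 P g f := by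
  simp only [dist0, abs_sub_comm]

lemma dist0_triangle [IsFiniteMeasure P] (f g h : Ω →ₘ[P] ℝ) :
    dist0 P f h ≤ dist0 P f g + dist0 P g h := by
  rw [dist0, dist0, dist0, ← integral_add (integrable_min_one_abs_sub f g)
    (integrable_min_one_abs_sub g h)]
  refine integral_mono (integrable_min_one_abs_sub f h)
    ((integrable_min_one_abs_sub f g).add (integrable_min_one_abs_sub g h)) fun ω => ?_
  simpa only [Real.dist_eq] using min_one_dist_triangle (f ω) (g ω) (h ω)

lemma mul_measureReal_le_dist0 [IsFiniteMeasure P] (f g : Ω →ₘ[P] ℝ) {ε : ℝ} (hε : 0 ≤ ε) :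
    min 1 ε * P.real {ω | ε ≤ |f ω - g ω|} ≤ dist0 P f g :=
  calc min 1 ε * P.real {ω | ε ≤ |f ω - g ω|}
      ≤ min 1 ε * P.real {ω | min 1 ε ≤ min 1 |f ω - g ω|} := by
        refine mul_le_mul_of_nonneg_left (measureReal_mono fun ω hω => ?_)
          (le_min zero_le_one hε)
        exact min_le_min le_rfl (show ε ≤ _ from hω)
    _ ≤ dist0 P f g := mul_meas_ge_le_integral_of_nonneg
        (Eventually.of_forall fun _ => le_min zero_le_one (abs_nonneg _))
        (integrable_min_one_abs_sub f g) _

lemma dist0_le_add_measureReal [IsProbabilityMeasure P] (f g : Ω →ₘ[P] ℝ) {ε : ℝ}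
    (hε : 0 ≤ ε) : dist0 P f g ≤ ε + P.real {ω | ε ≤ |f ω - g ω|} := by
  set S := {ω | ε ≤ |f ω - g ω|}
  have hS : MeasurableSet S :=
    measurableSet_le measurable_const
      (f.stronglyMeasurable.measurable.sub g.stronglyMeasurable.measurable).abs
  calc dist0 P f g ≤ ∫ ω, (ε + S.indicator (fun _ => (1 : ℝ)) ω) ∂P := by
        refine integral_mono (integrable_min_one_abs_sub f g)
          ((integrable_const ε).add ((integrable_const 1).indicator hS)) fun ω => ?_
        by_cases hω : ω ∈ S
        · simp only [Set.indicator_of_mem hω]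
          linarith [min_le_left 1 |f ω - g ω|]
        · simp only [Set.indicator_of_notMem hω, add_zero]
          exact (min_le_right _ _).trans (not_le.1 hω).le
    _ = ε + P.real S := by
        rw [integral_add (integrable_const ε) ((integrable_const 1).indicator hS),
          integral_indicator_const _ hS, integral_const, probReal_univ, one_smul, smul_eq_mul,
          mul_one]

lemma tendsto0_iff_tendstoInMeasure [IsProbabilityMeasure P] {f : ℕ → Ω →ₘ[P] ℝ}
    {g : Ω →ₘ[P] ℝ} :
    Tendsto0 P f g ↔ TendstoInMeasure P (fun n => f n) atTop g := by
  simp only [tendstoInMeasure_iff_measureReal_dist, Real.dist_eq]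
  constructor
  · intro hf ε hε
    refine squeeze_zero (fun _ => measureReal_nonneg) (fun n => ?_)
      (by simpa using hf.div_const (min 1 ε))
    rw [le_div_iff₀' (lt_min one_pos hε)]
    exact mul_measureReal_le_dist0 (f n) g hε.le
  · intro hf
    refine tendsto_order.2 ⟨fun a ha => Eventually.of_forall fun n => ha.trans_le
      (dist0_nonneg _ _), fun a ha => ?_⟩
    filter_upwards [(tendsto_order.1 (hf (a / 2) (half_pos ha))).2 (a / 2) (half_pos ha)]
      with n hn
    linarith [dist0_le_add_measureReal (f n) g (half_pos ha).le]

lemma tendsto0_of_ae_tendsto [IsProbabilityMeasure P] {f : ℕ → Ω →ₘ[P] ℝ} {g : Ω →ₘ[P] ℝ}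
    (hfg : ∀ᵐ ω ∂P, Tendsto (fun n => f n ω) atTop (nhds (g ω))) : Tendsto0 P f g :=
  tendsto0_iff_tendstoInMeasure.2 <|
    tendstoInMeasure_of_tendsto_ae (fun n => (f n).aestronglyMeasurable) hfg

lemma le_of_tendsto0 [IsProbabilityMeasure P] {f : ℕ → Ω →ₘ[P] ℝ} {g x : Ω →ₘ[P] ℝ}
    (hfg : Tendsto0 P f g) (hxf : ∀ n, x ≤ f n) : x ≤ g := by
  obtain ⟨ns, -, hns⟩ := (tendsto0_iff_tendstoInMeasure.1 hfg).exists_seq_tendsto_ae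
  rw [← AEEqFun.coeFn_le]
  filter_upwards [hns, ae_all_iff.2 fun n => AEEqFun.coeFn_le.2 (hxf (ns n))] with ω hω hxω
  exact ge_of_tendsto' hω hxω

lemma subset_closure0 (C : Set (Ω →ₘ[P] ℝ)) : C ⊆ closure0 P C :=
  fun f hf _ hε => ⟨f, hf, by rwa [dist0_self]⟩

lemma closure0_mono {C D : Set (Ω →ₘ[P] ℝ)} (h : C ⊆ D) : closure0 P C ⊆ closure0 P D :=
  fun _ hf ε hε => let ⟨g, hg, hfg⟩ := hf ε hε; ⟨g, h hg, hfg⟩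

lemma isClosed0_closure0 [IsFiniteMeasure P] (C : Set (Ω →ₘ[P] ℝ)) :
    IsClosed0 P (closure0 P C) := by
  intro f hf ε hε
  obtain ⟨g, hg, hfg⟩ := hf (ε / 2) (half_pos hε)
  obtain ⟨k, hk, hgk⟩ := hg (ε / 2) (half_pos hε)
  exact ⟨k, hk, (dist0_triangle f g k).trans_lt (by linarith)⟩

lemma mem_closure0_of_tendsto0 {C : Set (Ω →ₘ[P] ℝ)} {f : ℕ → Ω →ₘ[P] ℝ} {g : Ω →ₘ[P] ℝ}
    (hf : ∀ n, f n ∈ C) (hfg : Tendsto0 P f g) : g ∈ closure0 P C := by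
  intro ε hε
  obtain ⟨n, hn⟩ := (hfg.eventually (eventually_lt_nhds hε)).exists
  exact ⟨f n, hf n, by rwa [dist0_comm]⟩

lemma exists_tendsto0_of_mem_closure0 {C : Set (Ω →ₘ[P] ℝ)} {g : Ω →ₘ[P] ℝ}
    (hg : g ∈ closure0 P C) : ∃ f : ℕ → Ω →ₘ[P] ℝ, (∀ n, f n ∈ C) ∧ Tendsto0 P f g := by
  choose f hfC hfg using fun n : ℕ => hg (1 / (n + 1)) Nat.one_div_pos_of_nat
  refine ⟨f, hfC, squeeze_zero (fun n => dist0_nonneg _ _) (fun n => ?_)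
    tendsto_one_div_add_atTop_nhds_zero_nat⟩
  rw [dist0_comm]
  exact (hfg n).le

lemma closure0_setOf_le [IsProbabilityMeasure P] (x : Ω →ₘ[P] ℝ) :
    closure0 P {f | x ≤ f} ⊆ {f | x ≤ f} := fun _ hg =>
  let ⟨_, hf, hfg⟩ := exists_tendsto0_of_mem_closure0 hg
  le_of_tendsto0 hfg hf

lemma closure0_subset_L0plus [IsProbabilityMeasure P] {C : Set (Ω →ₘ[P] ℝ)}
    (hC : C ⊆ L0plus P) : closure0 P C ⊆ L0plus P :=
  (closure0_mono hC).trans (closure0_setOf_le 0)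

lemma cauchySeq_of_summable_min_one_dist {α : Type*} [PseudoMetricSpace α] {x : ℕ → α}
    (hx : Summable fun n => min 1 (dist (x n) (x (n + 1)))) : CauchySeq x := by
  refine cauchySeq_of_summable_dist (hx.congr_atTop ?_)
  filter_upwards [hx.tendsto_atTop_zero.eventually (eventually_lt_nhds one_pos)] with n hn
  exact min_eq_right (not_le.1 fun h => hn.not_ge (min_eq_left h).ge).le

section Complete

variable [IsProbabilityMeasure P]

lemma exists_tendsto0_of_summable_dist0 {f : ℕ → Ω →ₘ[P] ℝ}
    (hf : Summable fun n => dist0 P (f n) (f (n + 1))) : ∃ g, Tendsto0 P f g := by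
  have hsum : ∀ᵐ ω ∂P, Summable fun n => ‖min 1 |f n ω - f (n + 1) ω|‖ := by
    refine summable_norm_of_tsum_eLpNorm_ne_top le_rfl
      (fun n => (measurable_min_one_abs_sub _ _).aestronglyMeasurable) ?_
    have : ∀ n, eLpNorm (fun ω => min 1 |f n ω - f (n + 1) ω|) 1 P
        = ENNReal.ofReal (dist0 P (f n) (f (n + 1))) := fun n => by
      rw [eLpNorm_one_eq_lintegral_enorm, dist0, ofReal_integral_eq_lintegral_ofReal
        (integrable_min_one_abs_sub _ _)
        (Eventually.of_forall fun _ => le_min zero_le_one (abs_nonneg _))]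
      simp only [Real.enorm_of_nonneg (le_min zero_le_one (abs_nonneg _))]
    simp only [this, ← ENNReal.ofReal_tsum_of_nonneg (fun n => dist0_nonneg _ _) hf]
    exact ENNReal.ofReal_ne_top
  have hcauchy : ∀ᵐ ω ∂P, CauchySeq fun n => f n ω := by
    filter_upwards [hsum] with ω hω
    refine cauchySeq_of_summable_min_one_dist (hω.congr fun n => ?_)
    rw [Real.norm_of_nonneg (le_min zero_le_one (abs_nonneg _)), Real.dist_eq]
  have hlim : ∀ᵐ ω ∂P, Tendsto (fun n => f n ω) atTop
      (nhds (limUnder atTop fun n => (f n ω : ℝ))) :=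
    hcauchy.mono fun ω hω => hω.tendsto_limUnder
  have hmeas := aestronglyMeasurable_of_tendsto_ae atTop
    (fun n => (f n).aestronglyMeasurable) hlim
  refine ⟨AEEqFun.mk _ hmeas, tendsto0_of_ae_tendsto ?_⟩
  filter_upwards [hlim, AEEqFun.coeFn_mk _ hmeas] with ω hω hg
  rwa [hg]

lemma exists_tendsto0_of_cauchy {f : ℕ → Ω →ₘ[P] ℝ}
    (hf : ∀ ε > 0, ∃ N, ∀ m ≥ N, ∀ n ≥ N, dist0 P (f m) (f n) < ε) :
    ∃ g, Tendsto0 P f g := by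
  obtain ⟨φ, hφ, hφf⟩ := extraction_forall_of_eventually' fun k =>
    let ⟨N, hN⟩ := hf ((1 / 2) ^ k) (by positivity)
    ⟨N, fun M hM m hm n hn => hN m (hM.trans hm) n (hM.trans hn)⟩
  obtain ⟨g, hg⟩ := exists_tendsto0_of_summable_dist0 (f := f ∘ φ) <|
    summable_geometric_two.of_nonneg_of_le (fun _ => dist0_nonneg _ _) fun k =>
      (hφf k _ le_rfl _ (hφ.monotone k.le_succ)).le
  refine ⟨g, Metric.tendsto_atTop.2 fun ε hε => ?_⟩
  obtain ⟨N, hN⟩ := hf (ε / 2) (half_pos hε)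
  obtain ⟨k, hkN, hk⟩ := ((tendsto_atTop.1 hφ.tendsto_atTop N).and
    (hg.eventually (eventually_lt_nhds (half_pos hε)))).exists
  refine ⟨N, fun n hn => ?_⟩
  rw [Real.dist_0_eq_abs, abs_of_nonneg (dist0_nonneg _ _)]
  linarith [dist0_triangle (f n) (f (φ k)) g, hN n hn (φ k) hkN,
    show dist0 P (f (φ k)) g < ε / 2 from hk]

end Complete

section Bounded

variable {C : Set (Ω →ₘ[P] ℝ)}

lemma bounded0_iff :
    Bounded0 P C ↔ ∀ δ > 0, ∀ᶠ M in atTop, ∀ f ∈ C, P {ω | M < f ω} ≤ δ := by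
  simp only [Bounded0, ENNReal.tendsto_nhds_zero, iSup₂_le_iff]

lemma Bounded0.exists_measureReal_le (hC : Bounded0 P C) {δ : ℝ} (hδ : 0 < δ) :
    ∃ M, ∀ f ∈ C, P.real {ω | M < f ω} ≤ δ :=
  let ⟨M, hM⟩ := (bounded0_iff.1 hC _ (ENNReal.ofReal_pos.2 hδ)).exists
  ⟨M, fun f hf => ENNReal.toReal_le_of_le_ofReal hδ.le (hM f hf)⟩

lemma Bounded0.closure0 [IsFiniteMeasure P] (hC : Bounded0 P C) :
    Bounded0 P (closure0 P C) := by
  rw [bounded0_iff] at hC ⊢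
  intro δ hδ
  filter_upwards [(tendsto_atTop_add_const_right atTop (-1) tendsto_id).eventually (hC δ hδ)]
    with M hM f hf
  refine ENNReal.le_of_forall_pos_le_add fun η hη _ => ?_
  obtain ⟨g, hg, hfg⟩ := hf η hη
  have hsub : {ω | M < f ω} ⊆ {ω | M + -1 < g ω} ∪ {ω | 1 ≤ |f ω - g ω|} := by
    intro ω hω
    by_contra h
    simp only [Set.mem_union, Set.mem_ofPred_eq, not_or, not_lt, not_le] at h hω
    linarith [le_abs_self (f ω - g ω)]
  have hfar : P {ω | 1 ≤ |f ω - g ω|} ≤ η := by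
    rw [← ofReal_measureReal, ← ENNReal.ofReal_coe_nnreal]
    refine ENNReal.ofReal_le_ofReal ?_
    simpa using (mul_measureReal_le_dist0 f g zero_le_one).trans hfg.le
  calc P {ω | M < f ω} ≤ P {ω | M + -1 < g ω} + P {ω | 1 ≤ |f ω - g ω|} :=
        (measure_mono hsub).trans (measure_union_le _ _)
    _ ≤ δ + η := add_le_add (hM g hg) hfar

end Bounded

lemma sq_exp_gap_le {a b ε M : ℝ} (hε : 0 ≤ ε) (haM : a ≤ M) (hbM : b ≤ M) (hab : ε ≤ |a - b|) :
    (Real.exp (-M / 2) * (1 - Real.exp (-ε / 2))) ^ 2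
      ≤ (Real.exp (-a / 2) - Real.exp (-b / 2)) ^ 2 := by
  wlog hba : b ≤ a generalizing a b
  · rw [sub_sq_comm]
    exact this hbM haM (by rwa [abs_sub_comm]) (le_of_not_ge hba)
  rw [abs_of_nonneg (sub_nonneg.2 hba)] at hab
  have hεab : Real.exp (-(a - b) / 2) ≤ Real.exp (-ε / 2) := Real.exp_le_exp.2 (by linarith)
  have hε1 : Real.exp (-ε / 2) ≤ 1 := Real.exp_le_one_iff.2 (by linarith)
  have hgap : Real.exp (-b / 2) - Real.exp (-a / 2)
      = Real.exp (-b / 2) * (1 - Real.exp (-(a - b) / 2)) := by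
    rw [mul_sub, mul_one, ← Real.exp_add]; ring_nf
  rw [sub_sq_comm, hgap]
  refine pow_le_pow_left₀ (mul_nonneg (Real.exp_pos _).le (by linarith)) ?_ 2
  exact mul_le_mul (Real.exp_le_exp.2 (by linarith)) (by linarith) (by linarith)
    (Real.exp_pos _).le

section ExpUtility

variable {f g : Ω →ₘ[P] ℝ}

noncomputable def expUtility (P : Measure Ω) (f : Ω →ₘ[P] ℝ) : ℝ :=
  ∫ ω, (1 - Real.exp (-f ω)) ∂P

/-- The squared Hellinger distance between `e^{-f} P` and `e^{-g} P`. -/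
noncomputable def hellinger (P : Measure Ω) (f g : Ω →ₘ[P] ℝ) : ℝ :=
  ∫ ω, (Real.exp (-f ω / 2) - Real.exp (-g ω / 2)) ^ 2 ∂P

lemma ae_nonneg_of_mem_L0plus (hf : f ∈ L0plus P) : ∀ᵐ ω ∂P, 0 ≤ f ω := by
  filter_upwards [AEEqFun.coeFn_le.2 (show 0 ≤ f from hf), AEEqFun.coeFn_zero (β := ℝ) (μ := P)]
    with ω hω h0
  rwa [h0] at hω

lemma integrable_of_ae_abs_le_one [IsFiniteMeasure P] {u : Ω → ℝ} (hu : Measurable u)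
    (hu1 : ∀ᵐ ω ∂P, |u ω| ≤ 1) : Integrable u P :=
  (integrable_const (1 : ℝ)).mono' hu.aestronglyMeasurable hu1

lemma integrable_one_sub_exp_neg [IsFiniteMeasure P] (hf : f ∈ L0plus P) :
    Integrable (fun ω => 1 - Real.exp (-f ω)) P := by
  refine integrable_of_ae_abs_le_one
    (measurable_const.sub (Real.measurable_exp.comp f.stronglyMeasurable.measurable.neg)) ?_
  filter_upwards [ae_nonneg_of_mem_L0plus hf] with ω hω
  have := Real.exp_pos (-f ω)
  have := Real.exp_le_one_iff.2 (neg_nonpos.2 hω)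
  rw [abs_le]; constructor <;> linarith

lemma integrable_sq_exp_neg_half_sub [IsFiniteMeasure P] (hf : f ∈ L0plus P)
    (hg : g ∈ L0plus P) :
    Integrable (fun ω => (Real.exp (-f ω / 2) - Real.exp (-g ω / 2)) ^ 2) P := by
  refine integrable_of_ae_abs_le_one (Measurable.pow_const
    ((Real.measurable_exp.comp (f.stronglyMeasurable.measurable.neg.div_const 2)).sub
    (Real.measurable_exp.comp (g.stronglyMeasurable.measurable.neg.div_const 2))) 2) ?_
  filter_upwards [ae_nonneg_of_mem_L0plus hf, ae_nonneg_of_mem_L0plus hg] with ω hfω hgω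
  have := Real.exp_pos (-f ω / 2)
  have := Real.exp_pos (-g ω / 2)
  have := Real.exp_le_one_iff.2 (show -f ω / 2 ≤ 0 by linarith)
  have := Real.exp_le_one_iff.2 (show -g ω / 2 ≤ 0 by linarith)
  rw [abs_of_nonneg (sq_nonneg _)]
  nlinarith

lemma expUtility_nonneg (hf : f ∈ L0plus P) : 0 ≤ expUtility P f := by
  refine integral_nonneg_of_ae ?_
  filter_upwards [ae_nonneg_of_mem_L0plus hf] with ω hω
  exact sub_nonneg.2 (Real.exp_le_one_iff.2 (neg_nonpos.2 hω))

lemma expUtility_le_one [IsProbabilityMeasure P] (hf : f ∈ L0plus P) : expUtility P f ≤ 1 := by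
  simpa [expUtility] using integral_mono (integrable_one_sub_exp_neg hf) (integrable_const 1)
    fun ω => by linarith [Real.exp_pos (-f ω)]

lemma one_sub_exp_neg_le_of_le (hfg : f ≤ g) :
    (fun ω => 1 - Real.exp (-f ω)) ≤ᵐ[P] fun ω => 1 - Real.exp (-g ω) := by
  filter_upwards [AEEqFun.coeFn_le.2 hfg] with ω hω
  linarith [Real.exp_le_exp.2 (neg_le_neg hω)]

lemma expUtility_mono [IsFiniteMeasure P] (hf : f ∈ L0plus P) (hfg : f ≤ g) :
    expUtility P f ≤ expUtility P g :=
  integral_mono_ae (integrable_one_sub_exp_neg hf)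
    (integrable_one_sub_exp_neg (le_trans hf hfg)) (one_sub_exp_neg_le_of_le hfg)

lemma eq_of_le_of_expUtility_le [IsFiniteMeasure P] (hf : f ∈ L0plus P) (hfg : f ≤ g)
    (h : expUtility P g ≤ expUtility P f) : f = g := by
  have heq := (integral_eq_iff_of_ae_le (integrable_one_sub_exp_neg hf)
    (integrable_one_sub_exp_neg (le_trans hf hfg)) (one_sub_exp_neg_le_of_le hfg)).1
    (le_antisymm (expUtility_mono hf hfg) h)
  refine AEEqFun.ext ?_
  filter_upwards [heq] with ω hω
  simpa using hω

lemma one_sub_exp_neg_midpoint (a b : ℝ) :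
    1 - Real.exp (-(1 / 2 * a + 1 / 2 * b))
      = ((1 - Real.exp (-a)) + (1 - Real.exp (-b))) / 2
        + (Real.exp (-a / 2) - Real.exp (-b / 2)) ^ 2 / 2 := by
  have ha : Real.exp (-a) = Real.exp (-a / 2) ^ 2 := by rw [sq, ← Real.exp_add]; ring_nf
  have hb : Real.exp (-b) = Real.exp (-b / 2) ^ 2 := by rw [sq, ← Real.exp_add]; ring_nf
  have hab : Real.exp (-(1 / 2 * a + 1 / 2 * b)) = Real.exp (-a / 2) * Real.exp (-b / 2) := by
    rw [← Real.exp_add]; ring_nf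
  rw [ha, hb, hab]
  ring

lemma expUtility_midpoint [IsFiniteMeasure P] (hf : f ∈ L0plus P) (hg : g ∈ L0plus P) :
    expUtility P ((1 / 2 : ℝ) • f + (1 / 2 : ℝ) • g)
      = (expUtility P f + expUtility P g) / 2 + hellinger P f g / 2 := by
  have hint := integrable_sq_exp_neg_half_sub hf hg
  calc expUtility P ((1 / 2 : ℝ) • f + (1 / 2 : ℝ) • g)
      = ∫ ω, (((1 - Real.exp (-f ω)) + (1 - Real.exp (-g ω))) / 2
          + (Real.exp (-f ω / 2) - Real.exp (-g ω / 2)) ^ 2 / 2) ∂P := by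
        refine integral_congr_ae ?_
        filter_upwards [AEEqFun.coeFn_add ((1 / 2 : ℝ) • f) ((1 / 2 : ℝ) • g),
          AEEqFun.coeFn_smul (1 / 2 : ℝ) f, AEEqFun.coeFn_smul (1 / 2 : ℝ) g] with ω h h1 h2
        rw [h, Pi.add_apply, h1, h2, Pi.smul_apply, Pi.smul_apply, smul_eq_mul, smul_eq_mul,
          one_sub_exp_neg_midpoint]
    _ = (expUtility P f + expUtility P g) / 2 + hellinger P f g / 2 := by
        rw [integral_add (f := fun ω => ((1 - Real.exp (-f ω)) + (1 - Real.exp (-g ω))) / 2)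
          (((integrable_one_sub_exp_neg hf).add (integrable_one_sub_exp_neg hg)).div_const 2)
          (hint.div_const 2), integral_div, integral_div,
          integral_add (integrable_one_sub_exp_neg hf) (integrable_one_sub_exp_neg hg)]
        rfl

lemma hellinger_le_expUtility_sub [IsFiniteMeasure P] (hf : f ∈ L0plus P) (hfg : f ≤ g) :
    hellinger P f g ≤ expUtility P g - expUtility P f := by
  have hg : g ∈ L0plus P := le_trans hf hfg
  rw [expUtility, expUtility, ← integral_sub (integrable_one_sub_exp_neg hg)
    (integrable_one_sub_exp_neg hf)]
  refine integral_mono_ae (integrable_sq_exp_neg_half_sub hf hg)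
    ((integrable_one_sub_exp_neg hg).sub (integrable_one_sub_exp_neg hf)) ?_
  filter_upwards [AEEqFun.coeFn_le.2 hfg] with ω hω
  have ha : Real.exp (-f ω) = Real.exp (-f ω / 2) ^ 2 := by rw [sq, ← Real.exp_add]; ring_nf
  have hb : Real.exp (-g ω) = Real.exp (-g ω / 2) ^ 2 := by rw [sq, ← Real.exp_add]; ring_nf
  have hle : Real.exp (-g ω / 2) ≤ Real.exp (-f ω / 2) := Real.exp_le_exp.2 (by linarith)
  rw [ha, hb]
  nlinarith [Real.exp_pos (-g ω / 2)]

/-- Outside the event where `f` or `g` exceeds `M`, a gap `|f - g| ≥ ε` forces a gap between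
`e^{-f/2}` and `e^{-g/2}`, which Markov's inequality controls by the Hellinger distance. -/
lemma exists_measureReal_le_hellinger [IsFiniteMeasure P] {ε : ℝ} (hε : 0 < ε) (M : ℝ) :
    ∃ c > 0, ∀ f ∈ L0plus P, ∀ g ∈ L0plus P,
      P.real {ω | ε ≤ |f ω - g ω|}
        ≤ P.real {ω | M < f ω} + P.real {ω | M < g ω} + hellinger P f g / c := by
  have h1 : 0 < 1 - Real.exp (-ε / 2) := sub_pos.2 (Real.exp_lt_one_iff.2 (by linarith))
  refine ⟨(Real.exp (-M / 2) * (1 - Real.exp (-ε / 2))) ^ 2, by positivity,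
    fun f hf g hg => ?_⟩
  set c := (Real.exp (-M / 2) * (1 - Real.exp (-ε / 2))) ^ 2
  set D := {ω | c ≤ (Real.exp (-f ω / 2) - Real.exp (-g ω / 2)) ^ 2}
  have hsub : {ω | ε ≤ |f ω - g ω|} ⊆ {ω | M < f ω} ∪ {ω | M < g ω} ∪ D := by
    intro ω hω
    by_contra h
    simp only [Set.mem_union, Set.mem_ofPred_eq, not_or, not_lt, not_le, D] at h hω
    exact h.2.not_ge (sq_exp_gap_le hε.le h.1.1 h.1.2 hω)
  have hD : c * P.real D ≤ hellinger P f g :=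
    mul_meas_ge_le_integral_of_nonneg (Eventually.of_forall fun _ => sq_nonneg _)
      (integrable_sq_exp_neg_half_sub hf hg) c
  calc P.real {ω | ε ≤ |f ω - g ω|} ≤ P.real ({ω | M < f ω} ∪ {ω | M < g ω} ∪ D) :=
        measureReal_mono hsub
    _ ≤ P.real {ω | M < f ω} + P.real {ω | M < g ω} + P.real D :=
        (measureReal_union_le _ _).trans (add_le_add_left (measureReal_union_le _ _) _)
    _ ≤ _ := by
        gcongr
        rwa [le_div_iff₀' (by positivity)]

lemma dist0_lt_of_hellinger_lt [IsProbabilityMeasure P] {D : Set (Ω →ₘ[P] ℝ)}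
    (hD : D ⊆ L0plus P) (hDb : Bounded0 P D) {ε : ℝ} (hε : 0 < ε) :
    ∃ η > 0, ∀ f ∈ D, ∀ g ∈ D, hellinger P f g < η → dist0 P f g < ε := by
  obtain ⟨M, hM⟩ := hDb.exists_measureReal_le (show 0 < ε / 8 by positivity)
  obtain ⟨c, hc, hfg⟩ := exists_measureReal_le_hellinger (P := P) (half_pos hε) M
  refine ⟨c * (ε / 8), by positivity, fun f hf g hg hQ => ?_⟩
  have : hellinger P f g / c < ε / 8 := by rwa [div_lt_iff₀' hc]
  linarith [dist0_le_add_measureReal f g (half_pos hε).le, hfg f (hD hf) g (hD hg), hM f hf,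
    hM g hg]

lemma exists_tendsto0_of_hellinger_le [IsProbabilityMeasure P] {D : Set (Ω →ₘ[P] ℝ)}
    (hD : D ⊆ L0plus P) (hDb : Bounded0 P D) {f : ℕ → Ω →ₘ[P] ℝ} (hfD : ∀ n, f n ∈ D)
    {e : ℕ → ℝ} (he : Tendsto e atTop (nhds 0))
    (hfe : ∀ m n, m ≤ n → hellinger P (f m) (f n) ≤ e m) : ∃ g, Tendsto0 P f g := by
  refine exists_tendsto0_of_cauchy fun ε hε => ?_
  obtain ⟨η, hη, hdist⟩ := dist0_lt_of_hellinger_lt hD hDb hε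
  obtain ⟨N, hN⟩ := eventually_atTop.1 (he.eventually (eventually_lt_nhds hη))
  refine ⟨N, fun m hm n hn => ?_⟩
  rcases le_total m n with hmn | hnm
  · exact hdist _ (hfD m) _ (hfD n) ((hfe m n hmn).trans_lt (hN m hm))
  · rw [dist0_comm]
    exact hdist _ (hfD n) _ (hfD m) ((hfe n m hnm).trans_lt (hN n hn))

end ExpUtility

lemma EReal.le_mul_add_mul_of_le_of_le {t x y : EReal} {a b : ℝ} (ha : 0 ≤ a) (hb : 0 ≤ b)
    (hab : a + b = 1) (htx : t ≤ x) (hty : t ≤ y) (hx : x ≠ ⊤) (hy : y ≠ ⊤) :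
    t ≤ a * x + b * y := by
  induction t using EReal.rec with
  | bot => exact bot_le
  | top => exact absurd (top_le_iff.1 htx) hx
  | coe t =>
    induction x using EReal.rec with
    | bot => exact absurd htx (not_le.2 (EReal.bot_lt_coe t))
    | top => exact absurd rfl hx
    | coe x =>
      induction y using EReal.rec with
      | bot => exact absurd hty (not_le.2 (EReal.bot_lt_coe t))
      | top => exact absurd rfl hy
      | coe y =>
        norm_cast at htx hty ⊢
        have ht : t = a * t + b * t := by rw [← add_mul, hab, one_mul]
        linarith [mul_le_mul_of_nonneg_left htx ha, mul_le_mul_of_nonneg_left hty hb]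

lemma convex_setOf_le_of_concave {E : Type*} [AddCommMonoid E] [Module ℝ E] {C : Set E}
    (hconv : Convex ℝ C) {U : E → EReal} (hUtop : ∀ f ∈ C, U f < ⊤)
    (hUconc : ∀ f ∈ C, ∀ g ∈ C, ∀ a b : ℝ, 0 ≤ a → 0 ≤ b → a + b = 1 →
      (a : EReal) * U f + (b : EReal) * U g ≤ U (a • f + b • g)) (t : EReal) :
    Convex ℝ {f | f ∈ C ∧ t ≤ U f} := fun f hf g hg a b ha hb hab =>
  ⟨hconv hf.1 hg.1 ha hb hab, (EReal.le_mul_add_mul_of_le_of_le ha hb hab hf.2 hg.2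
    (hUtop f hf.1).ne (hUtop g hg.1).ne).trans (hUconc f hf.1 g hg.1 a b ha hb hab)⟩

section Maximization

variable [IsProbabilityMeasure P]

lemma exists_ge_forall_expUtility_le_add {D : Set (Ω →ₘ[P] ℝ)} (hD : D ⊆ L0plus P)
    {x : Ω →ₘ[P] ℝ} (hx : x ∈ D) {δ : ℝ} (hδ : 0 < δ) :
    ∃ y ∈ D, x ≤ y ∧ ∀ k ∈ D, x ≤ k → expUtility P k ≤ expUtility P y + δ := by
  set S := expUtility P '' {k | k ∈ D ∧ x ≤ k}
  have hbdd : BddAbove S := ⟨1, by rintro _ ⟨k, hk, rfl⟩; exact expUtility_le_one (hD hk.1)⟩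
  obtain ⟨_, ⟨y, ⟨hyD, hxy⟩, rfl⟩, hy⟩ :=
    exists_lt_of_lt_csSup (Set.Nonempty.image (s := {k | k ∈ D ∧ x ≤ k}) _ ⟨x, hx, le_rfl⟩)
      (sub_lt_self (sSup S) hδ)
  exact ⟨y, hyD, hxy, fun k hk hxk => by linarith [le_csSup hbdd ⟨k, ⟨hk, hxk⟩, rfl⟩]⟩

/-- Climb greedily: each step nearly maximizes `expUtility` above the current point. The
increments are then small in Hellinger distance, and the limit admits no strict majorant. -/
lemma exists_mem_maxSet_ge_of_isClosed0 {D : Set (Ω →ₘ[P] ℝ)} (hD : D ⊆ L0plus P)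
    (hDcl : IsClosed0 P D) (hDb : Bounded0 P D) {g : Ω →ₘ[P] ℝ} (hg : g ∈ D) :
    ∃ h ∈ maxSet P D, g ≤ h := by
  have hstep : ∀ (x : Ω →ₘ[P] ℝ) (n : ℕ), ∃ y, x ∈ D → y ∈ D ∧ x ≤ y ∧
      ∀ k ∈ D, x ≤ k → expUtility P k ≤ expUtility P y + 1 / (n + 1) := by
    intro x n
    by_cases hx : x ∈ D
    · obtain ⟨y, hyD, hxy, hy⟩ := exists_ge_forall_expUtility_le_add hD hx
        (Nat.one_div_pos_of_nat (α := ℝ) (n := n))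
      exact ⟨y, fun _ => ⟨hyD, hxy, hy⟩⟩
    · exact ⟨x, fun h => absurd h hx⟩
  choose next hnext using hstep
  let v : ℕ → Ω →ₘ[P] ℝ := fun n => Nat.rec g (fun n x => next x n) n
  have hvD : ∀ n, v n ∈ D := fun n => by
    induction n with
    | zero => exact hg
    | succ n ih => exact (hnext (v n) n ih).1
  have hv := fun n => hnext (v n) n (hvD n)
  have hmono : Monotone v := monotone_nat_of_le_succ fun n => (hv n).2.1
  have hbdd : BddAbove (Set.range fun n => expUtility P (v n)) :=
    ⟨1, by rintro _ ⟨n, rfl⟩; exact expUtility_le_one (hD (hvD n))⟩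
  set L := ⨆ n, expUtility P (v n)
  have hlim : Tendsto (fun n => L - expUtility P (v n)) atTop (nhds 0) := by
    rw [← sub_self L]
    exact tendsto_const_nhds.sub
      (tendsto_atTop_ciSup (fun m n hmn => expUtility_mono (hD (hvD m)) (hmono hmn)) hbdd)
  obtain ⟨h, hvh⟩ := exists_tendsto0_of_hellinger_le hD hDb hvD hlim fun m n hmn =>
      (hellinger_le_expUtility_sub (hD (hvD m)) (hmono hmn)).trans
        (sub_le_sub_right (le_ciSup hbdd n) _)
  have hhD : h ∈ D := hDcl (mem_closure0_of_tendsto0 hvD hvh)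
  have hle : ∀ n, v n ≤ h := fun n =>
    le_of_tendsto0 (f := fun m => v (m + n)) (hvh.comp (tendsto_add_atTop_nat n))
      fun m => hmono (Nat.le_add_left n m)
  refine ⟨h, ⟨hhD, fun k hk hhk => eq_of_le_of_expUtility_le (hD hhD) hhk ?_⟩, hle 0⟩
  have hψh : Tendsto (fun n : ℕ => expUtility P h + 1 / ((n : ℝ) + 1)) atTop
      (nhds (expUtility P h)) := by
    simpa using (tendsto_const_nhds (x := expUtility P h)).add
      tendsto_one_div_add_atTop_nhds_zero_nat
  refine ge_of_tendsto' hψh fun n =>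
    ((hv n).2.2 k hk ((hle n).trans hhk)).trans ?_
  exact add_le_add (expUtility_mono (hD (hvD (n + 1))) (hle (n + 1))) le_rfl

lemma MaxClosed.exists_mem_maxSet_ge {C : Set (Ω →ₘ[P] ℝ)} (hmax : MaxClosed P C)
    (hC : C ⊆ L0plus P) (hCb : Bounded0 P C) {x : Ω →ₘ[P] ℝ} (hx : x ∈ closure0 P C) :
    ∃ h ∈ maxSet P C, x ≤ h := by
  obtain ⟨h, hh, hxh⟩ := exists_mem_maxSet_ge_of_isClosed0 (closure0_subset_L0plus hC)
    (isClosed0_closure0 C) hCb.closure0 hx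
  exact ⟨h, ⟨hmax hh, fun k hk => hh.2 k (subset_closure0 C hk)⟩, hxh⟩

/-- Pick `f n ∈ K n` nearly maximizing `expUtility` on `K n`. For `m ≤ n` the midpoint of
`f m` and `f n` lies in `K m`, so the concavity defect `hellinger P (f m) (f n) / 2` is at most
the slack left at stage `m`. -/
lemma exists_tendsto0_of_antitone_convex {D : Set (Ω →ₘ[P] ℝ)} (hD : D ⊆ L0plus P)
    (hDb : Bounded0 P D) {K : ℕ → Set (Ω →ₘ[P] ℝ)} (hK : Antitone K)
    (hKconv : ∀ n, Convex ℝ (K n)) (hKne : ∀ n, (K n).Nonempty) (hKD : ∀ n, K n ⊆ D) :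
    ∃ f : ℕ → Ω →ₘ[P] ℝ, (∀ n, f n ∈ K n) ∧ ∃ g, Tendsto0 P f g := by
  set σ := fun n => sSup (expUtility P '' K n)
  have hbdd : ∀ n, BddAbove (expUtility P '' K n) := fun n =>
    ⟨1, by rintro _ ⟨k, hk, rfl⟩; exact expUtility_le_one (hD (hKD n hk))⟩
  have hsel : ∀ n : ℕ, ∃ f ∈ K n, σ n - 1 / (n + 1) < expUtility P f := fun n =>
    let ⟨_, ⟨f, hf, hψ⟩, hlt⟩ := exists_lt_of_lt_csSup ((hKne n).image _)
      (sub_lt_self (σ n) (Nat.one_div_pos_of_nat (α := ℝ) (n := n)))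
    ⟨f, hf, hψ ▸ hlt⟩
  choose f hfK hfσ using hsel
  have hσanti : Antitone σ := fun m n hmn =>
    csSup_le_csSup (hbdd m) ((hKne n).image _) (image_mono (hK hmn))
  have hσbdd : BddBelow (Set.range σ) := ⟨0, by
    rintro _ ⟨n, rfl⟩
    exact (expUtility_nonneg (hD (hKD n (hfK n)))).trans (le_csSup (hbdd n) ⟨f n, hfK n, rfl⟩)⟩
  set Λ := ⨅ n, σ n
  have he : Tendsto (fun n : ℕ => σ n - Λ + 2 * (1 / ((n : ℝ) + 1))) atTop (nhds 0) := by
    have := ((tendsto_atTop_ciInf hσanti hσbdd).sub_const Λ).add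
      (tendsto_one_div_add_atTop_nhds_zero_nat.const_mul 2)
    rwa [sub_self, mul_zero, add_zero] at this
  have hfe : ∀ m n, m ≤ n → hellinger P (f m) (f n) ≤ σ m - Λ + 2 * (1 / ((m : ℝ) + 1)) := by
    intro m n hmn
    have hmid : (1 / 2 : ℝ) • f m + (1 / 2 : ℝ) • f n ∈ K m :=
      hKconv m (hfK m) (hK hmn (hfK n)) (by norm_num) (by norm_num) (by norm_num)
    have hψmid := le_csSup (hbdd m) ⟨_, hmid, rfl⟩
    rw [expUtility_midpoint (hD (hKD m (hfK m))) (hD (hKD n (hfK n)))] at hψmid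
    linarith [hfσ m, hfσ n, ciInf_le hσbdd n, Nat.one_div_le_one_div (α := ℝ) hmn]
  exact ⟨f, hfK, exists_tendsto0_of_hellinger_le hD hDb (fun n => hKD n (hfK n)) he hfe⟩

lemma exists_mem_closure0_iSup_le {C : Set (Ω →ₘ[P] ℝ)} (hC : C ⊆ L0plus P)
    (hCne : C.Nonempty) (hconv : Convex ℝ C) (hCb : Bounded0 P C)
    {U : (Ω →ₘ[P] ℝ) → EReal} (hUtop : ∀ f ∈ C, U f < ⊤)
    (hUconc : ∀ f ∈ C, ∀ g ∈ C, ∀ a b : ℝ, 0 ≤ a → 0 ≤ b → a + b = 1 →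
      (a : EReal) * U f + (b : EReal) * U g ≤ U (a • f + b • g))
    (hUusc : ∀ f : ℕ → Ω →ₘ[P] ℝ, (∀ n, f n ∈ C) → ∀ g ∈ closure0 P C,
      Tendsto0 P f g → limsup (fun n => U (f n)) atTop ≤ U g) :
    ∃ g ∈ closure0 P C, (⨆ f ∈ C, U f) ≤ U g := by
  rcases eq_bot_or_bot_lt (⨆ f ∈ C, U f) with hs | hs
  · obtain ⟨f, hf⟩ := hCne
    exact ⟨f, subset_closure0 C hf, hs ▸ bot_le⟩
  obtain ⟨u, hu, hus, hut⟩ := exists_seq_strictMono_tendsto' hs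
  have hmaxseq : ∀ n, ∃ f ∈ C, u n < U f := fun n => by
    simpa only [lt_iSup_iff, exists_prop] using (hus n).2
  choose f hfC hfu using hmaxseq
  set K := fun n => convexHull ℝ (f '' Set.Ici n)
  have hKsub : ∀ n, K n ⊆ {h | h ∈ C ∧ u n ≤ U h} := fun n =>
    convexHull_min (by rintro _ ⟨k, hk, rfl⟩; exact ⟨hfC k, (hu.monotone hk).trans (hfu k).le⟩)
      (convex_setOf_le_of_concave hconv hUtop hUconc _)
  obtain ⟨g, hgK, h, hgh⟩ := exists_tendsto0_of_antitone_convex hC hCb (K := K)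
    (fun m n hmn => convexHull_mono (image_mono (Set.Ici_subset_Ici.2 hmn)))
    (fun n => convex_convexHull ℝ _)
    (fun n => ⟨f n, subset_convexHull ℝ _ ⟨n, Set.self_mem_Ici, rfl⟩⟩)
    (fun n _ hx => (hKsub n hx).1)
  have hh : h ∈ closure0 P C := mem_closure0_of_tendsto0 (fun n => (hKsub n (hgK n)).1) hgh
  refine ⟨h, hh, le_of_tendsto' hut fun n => ?_⟩
  calc u n ≤ limsup (fun k => U (g k)) atTop :=
        le_limsup_of_frequently_le ((eventually_ge_atTop n).frequently.mono fun k hk =>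
          (hu.monotone hk).trans (hKsub k (hgK k)).2)
    _ ≤ U h := hUusc g (fun k => (hKsub k (hgK k)).1) h hh hgh

end Maximization

end

/-- Proposition: concave monotone maximization.
If `C ⊆ L⁰₊` is convex, max-closed and bounded, and `𝕌 : L⁰₊ → [-∞, ∞)` is concave, upper
semi-continuous (w.r.t. convergence in probability) and monotone, then there is `g ∈ C^max`
with `sup_{f ∈ C} 𝕌(f) = 𝕌(g) < ∞`. -/
theorem statement0 {Ω : Type*} [MeasurableSpace Ω] (P : Measure Ω) [IsProbabilityMeasure P]
    (C : Set (Ω →ₘ[P] ℝ)) (hCL0 : C ⊆ L0plus P) (hCne : C.Nonempty)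
    (hconv : Convex ℝ C) (hmaxcl : MaxClosed P C) (hbdd : Bounded0 P C)
    (U : (Ω →ₘ[P] ℝ) → EReal)
    -- `U` takes values in `[-∞, ∞)` on `L⁰₊`:
    (hUlttop : ∀ f ∈ L0plus P, U f < ⊤)
    -- `U` is concave on `L⁰₊`:
    (hUconc : ∀ f ∈ L0plus P, ∀ g ∈ L0plus P, ∀ a b : ℝ, 0 ≤ a → 0 ≤ b → a + b = 1 →
      (a : EReal) * U f + (b : EReal) * U g ≤ U (a • f + b • g))
    -- `U` is upper semi-continuous w.r.t. the topology of convergence in probability: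
    (hUusc : ∀ f : ℕ → Ω →ₘ[P] ℝ, (∀ n, f n ∈ L0plus P) → ∀ g ∈ L0plus P,
      Tendsto0 P f g → Filter.limsup (fun n => U (f n)) Filter.atTop ≤ U g)
    -- `U` is monotone: `U f ≤ U g` whenever `f ≤ g` a.s.:
    (hUmono : ∀ f ∈ L0plus P, ∀ g ∈ L0plus P, f ≤ g → U f ≤ U g) :
    ∃ g ∈ maxSet P C, (⨆ f ∈ C, U f) = U g ∧ U g < ⊤ := by
  obtain ⟨g, hg, hsup⟩ := exists_mem_closure0_iSup_le hCL0 hCne hconv hbdd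
    (fun f hf => hUlttop f (hCL0 hf)) (fun f hf g hg => hUconc f (hCL0 hf) g (hCL0 hg))
    fun f hf g hg => hUusc f (fun n => hCL0 (hf n)) g (closure0_subset_L0plus hCL0 hg)
  obtain ⟨h, hh, hgh⟩ := hmaxcl.exists_mem_maxSet_ge hCL0 hbdd hg
  have hUh : U h ≤ ⨆ f ∈ C, U f := le_iSup₂ (f := fun f _ => U f) h hh.1
  refine ⟨h, hh, le_antisymm ?_ hUh, hUlttop h (hCL0 hh.1)⟩
  exact hsup.trans (hUmono g (closure0_subset_L0plus hCL0 hg) h (hCL0 hh.1) hgh)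
end

section
/- Let C ⊆ L0+ be convexly compact (convex, closed in the topology of convergence in probability, and bounded). Then for every f ∈ C there exists a maximal element h ∈ C^max with f ≤ h almost surely. -/
open MeasureTheory Filter Set

noncomputable section Statement3Aux

open MeasureTheory Filter Set

variable {Ω : Type*} [MeasurableSpace Ω]

/-- The strictly monotone bounded functional `f ↦ ∫ arctan ∘ f dP`. -/
def Phi3 (P : Measure Ω) (f : Ω →ₘ[P] ℝ) : ℝ := ∫ ω, Real.arctan (f ω) ∂P

variable {P : Measure Ω} [IsProbabilityMeasure P]

theorem integrable_arctan3 (f : Ω →ₘ[P] ℝ) :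
    Integrable (fun ω => Real.arctan (f ω)) P := by
  refine ⟨Real.continuous_arctan.comp_aestronglyMeasurable f.aestronglyMeasurable,
    HasFiniteIntegral.of_bounded (C := Real.pi / 2) (ae_of_all _ fun ω => ?_)⟩
  rw [Real.norm_eq_abs, abs_le]
  exact ⟨(Real.neg_pi_div_two_lt_arctan _).le, (Real.arctan_lt_pi_div_two _).le⟩

theorem Phi3_mono {f g : Ω →ₘ[P] ℝ} (h : f ≤ g) : Phi3 P f ≤ Phi3 P g :=
  integral_mono_ae (integrable_arctan3 f) (integrable_arctan3 g)
    ((AEEqFun.coeFn_le.2 h).mono fun _ hw => Real.arctan_strictMono.monotone hw)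

theorem Phi3_le (f : Ω →ₘ[P] ℝ) : Phi3 P f ≤ Real.pi / 2 := by
  calc Phi3 P f ≤ ∫ _ω, Real.pi / 2 ∂P :=
        integral_mono_ae (integrable_arctan3 f) (integrable_const _)
          (ae_of_all _ fun ω => (Real.arctan_lt_pi_div_two _).le)
    _ = Real.pi / 2 := by simp

theorem Phi3_strict {f g : Ω →ₘ[P] ℝ} (hle : f ≤ g) (h : Phi3 P g ≤ Phi3 P f) : f = g := by
  have hae := AEEqFun.coeFn_le.2 hle
  have hint : Integrable (fun ω => Real.arctan (g ω) - Real.arctan (f ω)) P :=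
    (integrable_arctan3 g).sub (integrable_arctan3 f)
  have h0 : ∫ ω, (Real.arctan (g ω) - Real.arctan (f ω)) ∂P = 0 := by
    rw [integral_sub (integrable_arctan3 g) (integrable_arctan3 f)]
    have := Phi3_mono hle
    unfold Phi3 at this h
    linarith
  have hz := (integral_eq_zero_iff_of_nonneg_ae
    (hae.mono fun ω hw => sub_nonneg.2 (Real.arctan_strictMono.monotone hw)) hint).1 h0
  refine AEEqFun.ext (hz.mono fun ω hw => ?_)
  have hw' : Real.arctan (g ω) - Real.arctan (f ω) = 0 := hw
  exact Real.arctan_injective (by linarith)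

end Statement3Aux

/-- If `C ⊆ L⁰₊` is convexly compact, then every `f ∈ C` is dominated
a.s. by some maximal element `h ∈ C^max`. -/
theorem statement3 {Ω : Type*} [MeasurableSpace Ω] (P : Measure Ω) [IsProbabilityMeasure P]
    (C : Set (Ω →ₘ[P] ℝ)) (hCL0 : C ⊆ L0plus P)
    (hconv : Convex ℝ C) (hcl : IsClosed0 P C) (hbdd : Bounded0 P C) :
    ∀ f ∈ C, ∃ h ∈ maxSet P C, f ≤ h := by
  classical
  intro f hf
  -- greedy step: nearly maximize `Phi3` among elements of `C` above `u`
  have step : ∀ u ∈ C, ∀ n : ℕ, ∃ v, v ∈ C ∧ u ≤ v ∧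
      ∀ w ∈ C, u ≤ w → Phi3 P w < Phi3 P v + 1 / (n + 1) := by
    intro u hu n
    set T : Set ℝ := Phi3 P '' {w | w ∈ C ∧ u ≤ w} with hT
    have hne : T.Nonempty := ⟨Phi3 P u, ⟨u, ⟨hu, le_refl u⟩, rfl⟩⟩
    have hbdT : BddAbove T := ⟨Real.pi / 2, by rintro x ⟨w, _, rfl⟩; exact Phi3_le _⟩
    have hlt : sSup T - 1 / (n + 1) < sSup T := by
      have : (0 : ℝ) < 1 / (n + 1) := by positivity
      linarith
    obtain ⟨x, hxT, hx⟩ := exists_lt_of_lt_csSup hne hlt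
    obtain ⟨v, ⟨hvC, huv⟩, rfl⟩ := hxT
    refine ⟨v, hvC, huv, fun w hwC huw => ?_⟩
    have : Phi3 P w ≤ sSup T := le_csSup hbdT ⟨w, ⟨hwC, huw⟩, rfl⟩
    linarith
  -- the recursively chosen increasing sequence
  let seq : ℕ → {v : Ω →ₘ[P] ℝ // v ∈ C} := fun n => Nat.rec ⟨f, hf⟩
    (fun n p => ⟨(step p.1 p.2 n).choose, (step p.1 p.2 n).choose_spec.1⟩) n
  let g : ℕ → Ω →ₘ[P] ℝ := fun n => (seq n).1
  have hgC : ∀ n, g n ∈ C := fun n => (seq n).2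
  have hsucc : ∀ n, g n ≤ g (n + 1) ∧
      ∀ w ∈ C, g n ≤ w → Phi3 P w < Phi3 P (g (n + 1)) + 1 / (n + 1) := by
    intro n
    have hspec := (step (seq n).1 (seq n).2 n).choose_spec
    exact ⟨hspec.2.1, hspec.2.2⟩
  have hg0 : g 0 = f := rfl
  -- pointwise representatives
  let u : ℕ → Ω → ℝ := fun n => (g n : Ω → ℝ)
  have humeas : ∀ n, Measurable (u n) := fun n => (g n).measurable
  have hA : ∀ᵐ ω ∂P, (∀ n, u n ω ≤ u (n + 1) ω) ∧ 0 ≤ u 0 ω := by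
    have h1 : ∀ᵐ ω ∂P, ∀ n, u n ω ≤ u (n + 1) ω :=
      ae_all_iff.2 fun n => AEEqFun.coeFn_le.2 (hsucc n).1
    have h2 : ∀ᵐ ω ∂P, 0 ≤ u 0 ω := by
      filter_upwards [AEEqFun.coeFn_le.2 (hCL0 hf), AEEqFun.coeFn_zero (μ := P) (β := ℝ)]
        with ω hω h0
      rw [h0] at hω
      exact hω
    exact h1.and h2
  set Bad := toMeasurable P {ω | ¬ ((∀ n, u n ω ≤ u (n + 1) ω) ∧ 0 ≤ u 0 ω)} with hBad
  have hBadmeas : MeasurableSet Bad := measurableSet_toMeasurable _ _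
  have hBadnull : P Bad = 0 := by rw [hBad, measure_toMeasurable]; exact ae_iff.1 hA
  set E := Badᶜ with hEdef
  have hEmeas : MeasurableSet E := hBadmeas.compl
  have hEgood : ∀ ω ∈ E, (∀ n, u n ω ≤ u (n + 1) ω) ∧ 0 ≤ u 0 ω := by
    intro ω hω
    by_contra hc
    exact hω (subset_toMeasurable _ _ hc)
  have hEa : ∀ᵐ ω ∂P, ω ∈ E := by
    rw [ae_iff]
    simpa [hEdef] using hBadnull
  -- monotone nonnegative representatives
  let v : ℕ → Ω → ℝ := fun n => E.indicator (u n)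
  have hvmeas : ∀ n, Measurable (v n) := fun n => (humeas n).indicator hEmeas
  have hvmono : ∀ ω, Monotone fun n => v n ω := by
    intro ω
    apply monotone_nat_of_le_succ
    intro n
    by_cases hω : ω ∈ E
    · simpa [v, Set.indicator_of_mem hω] using (hEgood ω hω).1 n
    · simp [v, Set.indicator_of_notMem hω]
  have hvnonneg : ∀ n ω, 0 ≤ v n ω := by
    intro n ω
    have h0 : 0 ≤ v 0 ω := by
      by_cases hω : ω ∈ E
      · simpa [v, Set.indicator_of_mem hω] using (hEgood ω hω).2
      · simp [v, Set.indicator_of_notMem hω]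
    exact h0.trans (hvmono ω (Nat.zero_le n))
  have hvae : ∀ n, v n =ᵐ[P] u n := by
    intro n
    filter_upwards [hEa] with ω hω
    exact Set.indicator_of_mem hω (u n)
  -- the candidate supremum
  set T : Ω → ENNReal := fun ω => ⨆ n, ENNReal.ofReal (v n ω) with hTdef
  have hTmeas : Measurable T := Measurable.iSup fun n => (hvmeas n).ennreal_ofReal
  have hTfin : ∀ᵐ ω ∂P, T ω ≠ ⊤ := by
    rw [ae_iff]
    simp only [ne_eq, not_not]
    by_contra hpos
    have hpos' : (0 : ENNReal) < P {ω | T ω = ⊤} := pos_iff_ne_zero.2 hpos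
    obtain ⟨ℓ, hℓB, hℓ0⟩ :=
      ((hbdd.eventually_lt_const hpos').and (eventually_ge_atTop (0 : ℝ))).exists
    have hsub : {ω | T ω = ⊤} ⊆ {ω | ENNReal.ofReal ℓ < T ω} := by
      intro ω hω
      rw [Set.mem_setOf_eq] at hω ⊢
      rw [hω]
      exact ENNReal.ofReal_lt_top
    have hunion : {ω | ENNReal.ofReal ℓ < T ω} = ⋃ n, {ω | ℓ < v n ω} := by
      ext ω
      simp only [Set.mem_setOf_eq, Set.mem_iUnion, hTdef, lt_iSup_iff]
      constructor
      · rintro ⟨n, hn⟩; exact ⟨n, (ENNReal.ofReal_lt_ofReal_iff_of_nonneg hℓ0).1 hn⟩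
      · rintro ⟨n, hn⟩; exact ⟨n, (ENNReal.ofReal_lt_ofReal_iff_of_nonneg hℓ0).2 hn⟩
    have hmono_sets : Monotone fun n => {ω | ℓ < v n ω} :=
      fun m n hmn ω hω => lt_of_lt_of_le hω (hvmono ω hmn)
    have hU : P (⋃ n, {ω | ℓ < v n ω}) = ⨆ n, P {ω | ℓ < v n ω} :=
      hmono_sets.directed_le.measure_iUnion
    have hbound : ∀ n, P {ω | ℓ < v n ω} ≤ ⨆ f ∈ C, P {ω | ℓ < f ω} := by
      intro n
      have heq : P {ω | ℓ < v n ω} = P {ω | ℓ < u n ω} :=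
        measure_congr ((hvae n).mono fun ω hω => congrArg (fun x : ℝ => ℓ < x) hω)
      rw [heq]
      exact le_biSup (fun f : Ω →ₘ[P] ℝ => P {ω | ℓ < f ω}) (hgC n)
    have : P {ω | T ω = ⊤} < P {ω | T ω = ⊤} := by
      calc P {ω | T ω = ⊤} ≤ P {ω | ENNReal.ofReal ℓ < T ω} := measure_mono hsub
        _ = ⨆ n, P {ω | ℓ < v n ω} := by rw [hunion, hU]
        _ ≤ ⨆ f ∈ C, P {ω | ℓ < f ω} := iSup_le hbound
        _ < P {ω | T ω = ⊤} := hℓB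
    exact lt_irrefl _ this
  -- the limit function
  set hfun : Ω → ℝ := fun ω => (T ω).toReal with hhdef
  have hhmeas : Measurable hfun := hTmeas.ennreal_toReal
  set h : Ω →ₘ[P] ℝ := AEEqFun.mk hfun hhmeas.aestronglyMeasurable with hhdef2
  have hcoe : (h : Ω → ℝ) =ᵐ[P] hfun := AEEqFun.coeFn_mk _ _
  have hle_h : ∀ ω, T ω ≠ ⊤ → ∀ n, v n ω ≤ hfun ω := by
    intro ω hω n
    have h1 : ENNReal.ofReal (v n ω) ≤ T ω := le_iSup (fun n => ENNReal.ofReal (v n ω)) n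
    have h2 := ENNReal.toReal_mono hω h1
    rwa [ENNReal.toReal_ofReal (hvnonneg n ω)] at h2
  have htend : ∀ ω, T ω ≠ ⊤ → Tendsto (fun n => v n ω) atTop (nhds (hfun ω)) := by
    intro ω hω
    have h1 : Tendsto (fun n => ENNReal.ofReal (v n ω)) atTop (nhds (T ω)) :=
      tendsto_atTop_iSup fun m n hmn => ENNReal.ofReal_le_ofReal (hvmono ω hmn)
    have h2 := (ENNReal.tendsto_toReal hω).comp h1
    exact h2.congr fun n => ENNReal.toReal_ofReal (hvnonneg n ω)
  have hgh : ∀ n, g n ≤ h := by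
    intro n
    rw [← AEEqFun.coeFn_le]
    filter_upwards [hvae n, hcoe, hTfin] with ω h1 h2 h3
    calc (g n : Ω → ℝ) ω = v n ω := h1.symm
      _ ≤ hfun ω := hle_h ω h3 n
      _ = h ω := h2.symm
  -- convergence in probability of `g n` to `h`
  have hdist : Tendsto (fun n => dist0 P h (g n)) atTop (nhds 0) := by
    have hmain : Tendsto (fun n => ∫ ω, min 1 |h ω - (g n) ω| ∂P) atTop
        (nhds (∫ _ω, (0 : ℝ) ∂P)) := by
      apply tendsto_integral_of_dominated_convergence (fun _ => (1 : ℝ))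
      · intro n
        exact (measurable_const.min
          ((AEEqFun.measurable h).sub (AEEqFun.measurable (g n))).abs).aestronglyMeasurable
      · exact integrable_const 1
      · intro n
        refine ae_of_all _ fun ω => ?_
        rw [Real.norm_eq_abs, abs_of_nonneg (le_min zero_le_one (abs_nonneg _))]
        exact min_le_left _ _
      · filter_upwards [hcoe, hTfin, ae_all_iff.2 hvae] with ω h2 h3 h1
        have hgl : Tendsto (fun n => (g n : Ω → ℝ) ω) atTop (nhds (h ω)) := by
          rw [h2]
          exact (htend ω h3).congr fun n => h1 n
        have t1 : Tendsto (fun n => h ω - (g n) ω) atTop (nhds 0) := by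
          simpa using (tendsto_const_nhds (x := (h : Ω → ℝ) ω)).sub hgl
        have t2 : Tendsto (fun n => |h ω - (g n) ω|) atTop (nhds 0) := by
          simpa using t1.abs
        simpa using (tendsto_const_nhds (x := (1 : ℝ))).min t2
    simpa [dist0] using hmain
  have hhC : h ∈ C := by
    apply hcl
    intro ε hε
    obtain ⟨n, hn⟩ := (hdist.eventually_lt_const hε).exists
    exact ⟨g n, hgC n, hn⟩
  -- maximality
  refine ⟨h, ⟨hhC, ?_⟩, hg0 ▸ hgh 0⟩
  intro w hwC hhw
  have key : ∀ n : ℕ, Phi3 P w < Phi3 P h + 1 / (n + 1) := by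
    intro n
    have h1 := (hsucc n).2 w hwC ((hgh n).trans hhw)
    have h2 : Phi3 P (g (n + 1)) ≤ Phi3 P h := Phi3_mono (hgh (n + 1))
    linarith
  have hPhile : Phi3 P w ≤ Phi3 P h := by
    by_contra hc
    push_neg at hc
    obtain ⟨n, hn⟩ := exists_nat_one_div_lt (sub_pos.2 hc)
    linarith [key n]
  exact Phi3_strict hhw hPhile
end

section
/- Let C ⊆ L0+ be convexly compact (convex, closed in the topology of convergence in probability, and bounded), and let (f_n)_{n∈ℕ} be a C-valued sequence. Then there exists a sequence (g_n)_{n∈ℕ} of forward convex combinations of (f_n)_{n∈ℕ} that converges P-almost surely to some g ∈ C. -/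
open MeasureTheory Filter Set

/-!
Minimize the bounded functional `φ h = E[e^{-2h}]` along the tail hulls
`D k = conv {f k, f (k+1), …}`. Since `(e^{-x} - e^{-y})² = e^{-2x} + e^{-2y} - 2 e^{-(x+y)}`,
the midpoint-convexity defect of `φ` at `(x, y)` is `‖e^{-x} - e^{-y}‖₂²`, so near-minimizers
`w k ∈ D k` make `e^{-w k}` Cauchy in `L²`, and along a subsequence it converges a.s.
Boundedness of `C` in probability prevents `w (n k) → ∞` on a set of positive probability, so
`w (n k)` itself converges a.s.; the limit lies in `C` because a.s. convergence implies
convergence in probability and `C` is closed.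
-/

open Topology

theorem Real.sq_exp_neg_sub_exp_neg (x y : ℝ) :
    (Real.exp (-x) - Real.exp (-y)) ^ 2 =
      Real.exp (-2 * x) + Real.exp (-2 * y) - 2 * Real.exp (-2 * (2⁻¹ * x + 2⁻¹ * y)) := by
  have hsq : ∀ z : ℝ, Real.exp (-z) ^ 2 = Real.exp (-2 * z) := fun z => by
    rw [← Real.exp_nat_mul]; push_cast; ring_nf
  rw [sub_sq, hsq, hsq, mul_assoc, ← Real.exp_add]
  ring_nf

theorem exists_seq_mem_midpoint_defect_lt {E : Type*} [AddCommGroup E] [Module ℝ E]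
    {D : ℕ → Set E} (hD : Antitone D) (hconv : ∀ k, Convex ℝ (D k))
    (hne : ∀ k, (D k).Nonempty) {φ : E → ℝ} (hbddBelow : BddBelow (φ '' D 0))
    (hbddAbove : BddAbove (φ '' D 0)) :
    ∃ w : ℕ → E, (∀ k, w k ∈ D k) ∧ ∀ δ > 0, ∃ N, ∀ p ≥ N, ∀ q ≥ N,
      φ (w p) + φ (w q) - 2 * φ ((2⁻¹ : ℝ) • w p + (2⁻¹ : ℝ) • w q) < δ := by
  set m : ℕ → ℝ := fun k => sInf (φ '' D k)
  have hbddBelow' : ∀ k, BddBelow (φ '' D k) := fun k =>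
    hbddBelow.mono (image_mono (hD (Nat.zero_le k)))
  have hm_le : ∀ k, ∀ x ∈ D k, m k ≤ φ x := fun k x hx => csInf_le (hbddBelow' k) ⟨x, hx, rfl⟩
  have hm_mono : Monotone m := fun p q hpq =>
    csInf_le_csInf (hbddBelow' p) ((hne q).image φ) (image_mono (hD hpq))
  obtain ⟨b, hb⟩ := hbddAbove
  have hm_bdd : BddAbove (range m) := ⟨b, by
    rintro _ ⟨k, rfl⟩
    obtain ⟨x, hx⟩ := hne k
    exact (hm_le k x hx).trans (hb ⟨x, hD (Nat.zero_le k) hx, rfl⟩)⟩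
  set L := ⨆ k, m k
  have hm_L : Tendsto m atTop (𝓝 L) := tendsto_atTop_ciSup hm_mono hm_bdd
  have hm_le_L : ∀ k, m k ≤ L := fun k => le_ciSup hm_bdd k
  have hnear : ∀ k, ∃ x ∈ D k, φ x < m k + 1 / ((k : ℝ) + 1) := fun k => by
    obtain ⟨_, ⟨x, hx, rfl⟩, hlt⟩ := exists_lt_of_csInf_lt ((hne k).image φ)
      (lt_add_of_pos_right (m k) (Nat.one_div_pos_of_nat (n := k)))
    exact ⟨x, hx, hlt⟩
  choose w hwD hw using hnear
  refine ⟨w, hwD, fun δ hδ => ?_⟩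
  -- for `p, q ≥ N` the midpoint lies in `D N`, so the defect is at most `2 (L - m N) + 2 / (N + 1)`
  have hε : Tendsto (fun N : ℕ => 2 * (L - m N) + 2 * (1 / ((N : ℝ) + 1))) atTop (𝓝 0) := by
    simpa using ((hm_L.const_sub L).const_mul 2).add
      (tendsto_one_div_add_atTop_nhds_zero_nat.const_mul 2)
  obtain ⟨N, hN⟩ := (hε.eventually_lt_const hδ).exists_forall_of_atTop
  refine ⟨N, fun p hp q hq => ?_⟩
  have hinv : ∀ n ≥ N, 1 / ((n : ℝ) + 1) ≤ 1 / ((N : ℝ) + 1) := fun n hn =>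
    Nat.one_div_le_one_div hn
  have hmid : m N ≤ φ ((2⁻¹ : ℝ) • w p + (2⁻¹ : ℝ) • w q) :=
    hm_le N _ (hconv N (hD hp (hwD p)) (hD hq (hwD q)) (by norm_num) (by norm_num) (by norm_num))
  linarith [hw p, hw q, hinv p hp, hinv q hq, hm_le_L p, hm_le_L q, hN N le_rfl]

theorem exists_strictMono_ae_tendsto_of_cauchy_eLpNorm {α E : Type*} [MeasurableSpace α]
    {μ : Measure α} [NormedAddCommGroup E] [CompleteSpace E] {f : ℕ → α → E} {p : ENNReal}
    (hf : ∀ n, AEStronglyMeasurable (f n) μ) (hp : 1 ≤ p)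
    (hcau : ∀ δ > 0, ∃ N, ∀ n ≥ N, ∀ m ≥ N, eLpNorm (f n - f m) p μ < δ) :
    ∃ ns : ℕ → ℕ, StrictMono ns ∧ ∀ᵐ x ∂μ, ∃ l, Tendsto (fun k => f (ns k) x) atTop (𝓝 l) := by
  have hcau' : ∀ k : ℕ, ∃ N, ∀ N' ≥ N, ∀ n ≥ N', ∀ m ≥ N',
      eLpNorm (f n - f m) p μ < 2⁻¹ ^ k := fun k => by
    obtain ⟨N, hN⟩ :=
      hcau ((2 : ENNReal)⁻¹ ^ k) (ENNReal.pow_pos (ENNReal.inv_pos.2 ENNReal.ofNat_ne_top) k)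
    exact ⟨N, fun N' hN' n hn m hm => hN n (hN'.trans hn) m (hN'.trans hm)⟩
  obtain ⟨ns, hns, hcau_ns⟩ := extraction_forall_of_eventually' hcau'
  refine ⟨ns, hns, Lp.ae_tendsto_of_cauchy_eLpNorm (fun k => hf (ns k)) hp ?_
    fun N n m hn hm => hcau_ns N _ (hns.monotone hn) _ (hns.monotone hm)⟩
  rw [ENNReal.tsum_geometric, ENNReal.one_sub_inv_two, inv_inv]
  exact ENNReal.ofNat_ne_top

theorem eLpNorm_two_eq_ofReal_sqrt_integral_sq {α : Type*} [MeasurableSpace α] {μ : Measure α}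
    {f : α → ℝ} (hf : MemLp f 2 μ) :
    eLpNorm f 2 μ = ENNReal.ofReal √(∫ a, f a ^ 2 ∂μ) := by
  rw [hf.eLpNorm_eq_integral_rpow_norm two_ne_zero ENNReal.ofNat_ne_top, Real.sqrt_eq_rpow]
  simp [Real.norm_eq_abs, sq_abs]

theorem tendsto_of_tendsto_exp_neg {ι : Type*} {F : Filter ι} [F.NeBot] {x : ι → ℝ} {l : ℝ}
    (hx : ¬Tendsto x F atTop) (h : Tendsto (fun i => Real.exp (-x i)) F (𝓝 l)) :
    Tendsto x F (𝓝 (-Real.log l)) := by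
  have hl : 0 < l := by
    refine (ge_of_tendsto' h fun i => (Real.exp_pos _).le).lt_of_ne' fun hl => hx ?_
    rw [hl, Real.tendsto_exp_comp_nhds_zero] at h
    exact tendsto_neg_atBot_iff.1 h
  have hlog := ((Real.continuousAt_log hl.ne').tendsto.comp h).neg
  simpa [Function.comp_def] using hlog

section L0

variable {Ω : Type*} [MeasurableSpace Ω] {P : Measure Ω} {C : Set (Ω →ₘ[P] ℝ)}

theorem Bounded0.ae_not_tendsto_atTop (hC : Bounded0 P C) {w : ℕ → Ω →ₘ[P] ℝ}
    (hw : ∀ k, w k ∈ C) : ∀ᵐ ω ∂P, ¬Tendsto (fun k => w k ω) atTop atTop := by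
  refine ae_iff.2 (le_antisymm (ge_of_tendsto' hC fun M => ?_) zero_le)
  set B : ℕ → Set Ω := fun K => {ω | ∀ k ≥ K, M < w k ω}
  have hB : Monotone B := fun K K' hK ω hω k hk => hω k (hK.trans hk)
  calc P {ω | ¬¬Tendsto (fun k => w k ω) atTop atTop} ≤ P (⋃ K, B K) := by
        refine measure_mono fun ω hω => mem_iUnion.2 ?_
        exact eventually_atTop.1 ((not_not.1 hω).eventually_gt_atTop M)
    _ = ⨆ K, P (B K) := hB.measure_iUnion
    _ ≤ ⨆ f ∈ C, P {ω | M < f ω} := iSup_le fun K =>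
        (measure_mono fun ω (hω : ω ∈ B K) => hω K le_rfl).trans
          (le_biSup (fun f : Ω →ₘ[P] ℝ => P {ω | M < f ω}) (hw K))

theorem tendsto_dist0_of_ae_tendsto [IsFiniteMeasure P] {g : ℕ → Ω →ₘ[P] ℝ} {h : Ω →ₘ[P] ℝ}
    (hlim : ∀ᵐ ω ∂P, Tendsto (fun n => g n ω) atTop (𝓝 (h ω))) :
    Tendsto (fun n => dist0 P h (g n)) atTop (𝓝 0) := by
  have h0 : ∫ _ω, (0 : ℝ) ∂P = 0 := integral_zero Ω ℝ
  rw [← h0]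
  refine tendsto_integral_of_dominated_convergence (fun _ => 1) (fun n => ?_)
    (integrable_const 1) (fun n => Eventually.of_forall fun ω => ?_) ?_
  · exact (measurable_const.min (h.measurable.sub (g n).measurable).abs).aestronglyMeasurable
  · rw [Real.norm_of_nonneg (le_min zero_le_one (abs_nonneg _))]
    exact min_le_left _ _
  · filter_upwards [hlim] with ω hω
    simpa using (tendsto_const_nhds (x := (1 : ℝ))).min
      ((tendsto_const_nhds (x := h ω)).sub hω).abs

theorem IsClosed0.mem_of_ae_tendsto [IsFiniteMeasure P] (hC : IsClosed0 P C)
    {g : ℕ → Ω →ₘ[P] ℝ} (hg : ∀ n, g n ∈ C) {h : Ω →ₘ[P] ℝ}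
    (hlim : ∀ᵐ ω ∂P, Tendsto (fun n => g n ω) atTop (𝓝 (h ω))) : h ∈ C := by
  refine hC fun ε hε => ?_
  obtain ⟨n, hn⟩ := ((tendsto_dist0_of_ae_tendsto hlim).eventually_lt_const hε).exists
  exact ⟨g n, hg n, hn⟩

theorem ae_nonneg_of_mem_L0plus_s5 {h : Ω →ₘ[P] ℝ} (hh : h ∈ L0plus P) : ∀ᵐ ω ∂P, 0 ≤ h ω := by
  filter_upwards [AEEqFun.coeFn_le.2 hh, AEEqFun.coeFn_zero (μ := P) (β := ℝ)] with ω h0 hz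
  rwa [hz] at h0

variable (P) in
noncomputable def meanExpNegTwo (h : Ω →ₘ[P] ℝ) : ℝ := ∫ ω, Real.exp (-2 * h ω) ∂P

variable [IsProbabilityMeasure P]

theorem integrable_exp_neg_mul {h : Ω →ₘ[P] ℝ} (hh : ∀ᵐ ω ∂P, 0 ≤ h ω) {c : ℝ} (hc : 0 ≤ c) :
    Integrable (fun ω => Real.exp (-c * h ω)) P := by
  refine Integrable.of_bound (Real.continuous_exp.comp_aestronglyMeasurable
    (h.aestronglyMeasurable.const_mul (-c))) 1 ?_
  filter_upwards [hh] with ω hω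
  rw [Real.norm_eq_abs, Real.abs_exp, Real.exp_le_one_iff]
  nlinarith

theorem meanExpNegTwo_mem_Icc {h : Ω →ₘ[P] ℝ} (hh : ∀ᵐ ω ∂P, 0 ≤ h ω) :
    meanExpNegTwo P h ∈ Icc 0 1 := by
  refine ⟨integral_nonneg fun ω => (Real.exp_pos _).le, ?_⟩
  calc meanExpNegTwo P h ≤ ∫ _ω, (1 : ℝ) ∂P := by
        refine integral_mono_ae (integrable_exp_neg_mul hh zero_le_two) (integrable_const 1) ?_
        filter_upwards [hh] with ω hω
        exact Real.exp_le_one_iff.2 (by linarith)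
    _ = 1 := by simp

theorem integral_sq_exp_neg_sub_exp_neg {x y : Ω →ₘ[P] ℝ} (hx : ∀ᵐ ω ∂P, 0 ≤ x ω)
    (hy : ∀ᵐ ω ∂P, 0 ≤ y ω) :
    ∫ ω, (Real.exp (-x ω) - Real.exp (-y ω)) ^ 2 ∂P = meanExpNegTwo P x + meanExpNegTwo P y
      - 2 * meanExpNegTwo P ((2⁻¹ : ℝ) • x + (2⁻¹ : ℝ) • y) := by
  have hmid : ∀ᵐ ω ∂P, ((2⁻¹ : ℝ) • x + (2⁻¹ : ℝ) • y) ω = 2⁻¹ * x ω + 2⁻¹ * y ω := by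
    filter_upwards [AEEqFun.coeFn_add ((2⁻¹ : ℝ) • x) ((2⁻¹ : ℝ) • y),
      AEEqFun.coeFn_smul (2⁻¹ : ℝ) x, AEEqFun.coeFn_smul (2⁻¹ : ℝ) y] with ω h1 h2 h3
    simp [h1, h2, h3]
  have hx' := integrable_exp_neg_mul hx zero_le_two
  have hy' := integrable_exp_neg_mul hy zero_le_two
  have hmid' := integrable_exp_neg_mul (h := (2⁻¹ : ℝ) • x + (2⁻¹ : ℝ) • y) (by
    filter_upwards [hmid, hx, hy] with ω hω hxω hyω
    rw [hω]
    positivity) zero_le_two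
  calc ∫ ω, (Real.exp (-x ω) - Real.exp (-y ω)) ^ 2 ∂P
      = ∫ ω, (Real.exp (-2 * x ω) + Real.exp (-2 * y ω)
          - 2 * Real.exp (-2 * ((2⁻¹ : ℝ) • x + (2⁻¹ : ℝ) • y) ω)) ∂P := by
        refine integral_congr_ae ?_
        filter_upwards [hmid] with ω hω
        rw [hω, Real.sq_exp_neg_sub_exp_neg]
    _ = _ := by
        rw [integral_sub (hx'.fun_add hy') (hmid'.const_mul 2), integral_add hx' hy',
          integral_const_mul]
        rfl

theorem exists_strictMono_ae_tendsto_exp_neg {w : ℕ → Ω →ₘ[P] ℝ}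
    (hw : ∀ k, ∀ᵐ ω ∂P, 0 ≤ w k ω)
    (hdefect : ∀ δ > 0, ∃ N, ∀ p ≥ N, ∀ q ≥ N, meanExpNegTwo P (w p) + meanExpNegTwo P (w q)
      - 2 * meanExpNegTwo P ((2⁻¹ : ℝ) • w p + (2⁻¹ : ℝ) • w q) < δ) :
    ∃ ns : ℕ → ℕ, StrictMono ns ∧
      ∀ᵐ ω ∂P, ∃ l, Tendsto (fun k => Real.exp (-w (ns k) ω)) atTop (𝓝 l) := by
  set a : ℕ → Ω → ℝ := fun k ω => Real.exp (-w k ω)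
  have ha : ∀ k, AEStronglyMeasurable (a k) P := fun k =>
    Real.continuous_exp.comp_aestronglyMeasurable (w k).aestronglyMeasurable.neg
  refine exists_strictMono_ae_tendsto_of_cauchy_eLpNorm ha one_le_two fun δ hδ => ?_
  obtain ⟨ε, -, hε, hεδ⟩ := ENNReal.lt_iff_exists_real_btwn.1 hδ
  obtain ⟨N, hN⟩ := hdefect (ε ^ 2) (pow_pos (ENNReal.ofReal_pos.1 hε) 2)
  refine ⟨N, fun p hp q hq => ?_⟩
  have hmem : MemLp (a p - a q) 2 P := by
    refine MemLp.of_bound ((ha p).sub (ha q)) 1 ?_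
    filter_upwards [hw p, hw q] with ω hpω hqω
    simp only [a, Pi.sub_apply, Real.norm_eq_abs, abs_sub_le_iff]
    constructor <;> linarith [Real.exp_pos (-w p ω), Real.exp_pos (-w q ω),
      Real.exp_le_one_iff.2 (neg_nonpos.2 hpω), Real.exp_le_one_iff.2 (neg_nonpos.2 hqω)]
  rw [eLpNorm_two_eq_ofReal_sqrt_integral_sq hmem]
  refine lt_of_le_of_lt (ENNReal.ofReal_le_ofReal ?_) hεδ
  rw [Real.sqrt_le_left (ENNReal.ofReal_pos.1 hε).le]
  simp only [a, Pi.sub_apply]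
  rw [integral_sq_exp_neg_sub_exp_neg (hw p) (hw q)]
  exact (hN p hp q hq).le

end L0

/-- forward convex combinations converging a.s.. If `C ⊆ L⁰₊` is convexly
compact and `(f n)` is a `C`-valued sequence, then there is a sequence `(g n)` of forward
convex combinations of `(f n)` converging `P`-a.s. to some `g∞ ∈ C`. -/
theorem statement5 {Ω : Type*} [MeasurableSpace Ω] (P : Measure Ω) [IsProbabilityMeasure P]
    (C : Set (Ω →ₘ[P] ℝ)) (hCL0 : C ⊆ L0plus P)
    (hconv : Convex ℝ C) (hcl : IsClosed0 P C) (hbdd : Bounded0 P C)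
    (f : ℕ → Ω →ₘ[P] ℝ) (hf : ∀ n, f n ∈ C) :
    ∃ g : ℕ → Ω →ₘ[P] ℝ, ∃ glim ∈ C, ForwardConvexComb P f g ∧
      ∀ᵐ ω ∂P, Tendsto (fun n => g n ω) atTop (nhds (glim ω)) := by
  set D : ℕ → Set (Ω →ₘ[P] ℝ) := fun k => convexHull ℝ (f '' Ici k)
  have hD : Antitone D := fun _ _ hpq => convexHull_mono (image_mono (Ici_subset_Ici.2 hpq))
  have hDC : D 0 ⊆ C := convexHull_min (image_subset_iff.2 fun n _ => hf n) hconv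
  have hnonneg : ∀ h ∈ D 0, ∀ᵐ ω ∂P, 0 ≤ h ω := fun h hh => ae_nonneg_of_mem_L0plus_s5 (hCL0 (hDC hh))
  have hφ : ∀ h ∈ D 0, meanExpNegTwo P h ∈ Icc 0 1 := fun h hh =>
    meanExpNegTwo_mem_Icc (hnonneg h hh)
  obtain ⟨w, hwD, hdefect⟩ := exists_seq_mem_midpoint_defect_lt hD (fun _ => convex_convexHull ℝ _)
    (fun _ => (nonempty_Ici.image f).convexHull) (φ := meanExpNegTwo P)
    ⟨0, forall_mem_image.2 fun h hh => (hφ h hh).1⟩ ⟨1, forall_mem_image.2 fun h hh => (hφ h hh).2⟩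
  have hwD0 : ∀ k, w k ∈ D 0 := fun k => hD (Nat.zero_le k) (hwD k)
  obtain ⟨ns, hns, hexp⟩ :=
    exists_strictMono_ae_tendsto_exp_neg (fun k => hnonneg _ (hwD0 k)) hdefect
  have hlim : ∀ᵐ ω ∂P, ∃ l, Tendsto (fun k => w (ns k) ω) atTop (𝓝 l) := by
    filter_upwards [hexp, hbdd.ae_not_tendsto_atTop fun k => hDC (hwD0 (ns k))]
      with ω ⟨_, hl⟩ hω
    exact ⟨_, tendsto_of_tendsto_exp_neg hω hl⟩
  obtain ⟨g, hg_meas, hg⟩ :=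
    measurable_limit_of_tendsto_metrizable_ae (fun k => (w (ns k)).aemeasurable) hlim
  set glim : Ω →ₘ[P] ℝ := AEEqFun.mk g hg_meas.aestronglyMeasurable
  have hglim : ∀ᵐ ω ∂P, Tendsto (fun k => w (ns k) ω) atTop (𝓝 (glim ω)) := by
    filter_upwards [hg, AEEqFun.coeFn_mk g hg_meas.aestronglyMeasurable] with ω hω hmk
    rwa [hmk]
  exact ⟨fun k => w (ns k), glim, hcl.mem_of_ae_tendsto (fun k => hDC (hwD0 (ns k))) hglim,
    fun k => hD (hns.id_le k) (hwD (ns k)), hglim⟩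
end

section
/- Let C ⊆ L0+ be convex, max-closed and bounded, and let S be its solid hull. Then the maximal elements of C and of S coincide (C^max = S^max), and the outer support points of C and of S coincide (C^osp = S^osp). -/
open MeasureTheory Filter Set

/-- If `C ⊆ L⁰₊` is convex, max-closed and bounded and `S` is its solid
hull, then `C^max = S^max` and `C^osp = S^osp`. -/
theorem statement7 {Ω : Type*} [MeasurableSpace Ω] (P : Measure Ω) [IsProbabilityMeasure P]
    (C : Set (Ω →ₘ[P] ℝ)) (hCL0 : C ⊆ L0plus P)
    (hconv : Convex ℝ C) (hmaxcl : MaxClosed P C) (hbdd : Bounded0 P C) :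
    maxSet P C = maxSet P (solidHull P C) ∧ osp P C = osp P (solidHull P C) := by
  classical
  have hCS : C ⊆ solidHull P C := fun f hf => ⟨hCL0 hf, f, hf, le_refl f⟩
  have hmax : maxSet P C = maxSet P (solidHull P C) := by
    ext f
    constructor
    · rintro ⟨hfC, hfmax⟩
      refine ⟨hCS hfC, ?_⟩
      rintro g ⟨hg0, h, hhC, hgh⟩ hfg
      have hfh := hfmax h hhC (hfg.trans hgh)
      exact le_antisymm hfg (hfh ▸ hgh)
    · rintro ⟨⟨hf0, h, hhC, hfh⟩, hfmax⟩
      have hfh' : f = h := hfmax h (hCS hhC) hfh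
      subst hfh'
      exact ⟨hhC, fun g hg hfg => hfmax g (hCS hg) hfg⟩
  have hpair : ∀ (μ : Measure Ω), μ ≪ P →
      (⨆ f ∈ solidHull P C, pairing μ f) = ⨆ f ∈ C, pairing μ f := by
    intro μ hμ
    apply le_antisymm
    · refine iSup₂_le fun f hf => ?_
      obtain ⟨_, h, hhC, hfh⟩ := hf
      refine le_trans ?_ (le_iSup₂ (f := fun f _ => pairing μ f) h hhC)
      apply lintegral_mono_ae
      have hle : f ≤ᵐ[P] h := MeasureTheory.AEEqFun.coeFn_le.mpr hfh
      filter_upwards [hle.filter_mono hμ.ae_le] with ω hω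
      exact ENNReal.ofReal_le_ofReal hω
    · exact iSup₂_le fun f hf => le_iSup₂ (f := fun f _ => pairing μ f) f (hCS hf)
  have hzero : solidHull P C = {0} ↔ C = {0} := by
    constructor
    · intro hS
      have h0 : (0 : Ω →ₘ[P] ℝ) ∈ solidHull P C := hS ▸ rfl
      obtain ⟨_, g, hgC, _⟩ := h0
      have hg0 : g = 0 := by
        have := hCS hgC
        rwa [hS, Set.mem_singleton_iff] at this
      refine Set.eq_singleton_iff_unique_mem.mpr ⟨hg0 ▸ hgC, fun x hx => ?_⟩
      have := hCS hx
      rwa [hS, Set.mem_singleton_iff] at this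
    · intro hC
      ext f
      simp only [solidHull, hC, Set.mem_setOf_eq, Set.mem_singleton_iff]
      constructor
      · rintro ⟨hf0, g, rfl, hfg⟩
        exact le_antisymm hfg hf0
      · rintro rfl
        exact ⟨le_refl (0 : Ω →ₘ[P] ℝ), 0, rfl, le_refl _⟩
  refine ⟨hmax, ?_⟩
  ext g
  simp only [osp, Set.mem_setOf_eq, ← hmax, hzero]
  constructor <;> rintro ⟨hg, h | ⟨μ, hμP, hσ, h1, h2, h3⟩⟩
  · exact ⟨hg, Or.inl h⟩
  · exact ⟨hg, Or.inr ⟨μ, hμP, hσ, h1, h2, (hpair μ hμP).trans h3⟩⟩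
  · exact ⟨hg, Or.inl h⟩
  · exact ⟨hg, Or.inr ⟨μ, hμP, hσ, h1, h2, ((hpair μ hμP).symm).trans h3⟩⟩
end
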